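/- arXiv:1711.06557 — 3 statements merged into one kernel-verified Lean document; each statement's English description precedes it below -/
import Mathlib

section
/- On the torus 𝕋ⁿ (n ≥ 2), if a continuous function f satisfies I_v f = 0 for every v ∈ 2πℤⁿ \ {0}, then f = 0. -/
/-!
Descend `f` to a continuous function `F` on the unit torus `ℝⁿ / ℤⁿ` (after rescaling by `2π`).
For a frequency `k ∈ ℤⁿ` pick a nonzero `w ∈ ℤⁿ` orthogonal to `k`, which exists as `n ≥ 2`.
The character `e_k` is constant along the closed geodesics in direction `w`, so averaging the
Fourier integral `∫ e_{-k} F` over these geodesics (Fubini and translation invariance of Haar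
measure) expresses it through the vanishing averages of `F`. Hence every Fourier coefficient of
`F` vanishes, and so does `F`.
-/

open MeasureTheory Real

open Function Set Complex

theorem integral_eq_zero_of_forall_intervalIntegral_comp_add_eq_zero {G E : Type*}
    [TopologicalSpace G] [AddGroup G] [IsTopologicalAddGroup G] [CompactSpace G]
    [SecondCountableTopology G] [MeasurableSpace G] [BorelSpace G]
    [NormedAddCommGroup E] [NormedSpace ℝ E] [CompleteSpace E]
    (μ : Measure G) [IsFiniteMeasure μ] [μ.IsAddRightInvariant] (h : C(G, E)) {c : ℝ → G}
    (hc : Continuous c) (h0 : ∀ z, ∫ t in (0 : ℝ)..1, h (z + c t) = 0) :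
    ∫ z, h z ∂μ = 0 := by
  have hint : Integrable (uncurry fun z t => h (z + c t)) (μ.prod (volume.restrict (Ioc 0 1))) :=
    .of_bound (h.continuous.comp (continuous_fst.add (hc.comp continuous_snd))).aestronglyMeasurable
      ‖h‖ (.of_forall fun _ => h.norm_coe_le_norm _)
  calc ∫ z, h z ∂μ = ∫ t in Ioc (0 : ℝ) 1, ∫ z, h (z + c t) ∂μ := by
        simp_rw [integral_add_right_eq_self (μ := μ) h, setIntegral_const]
        simp
    _ = ∫ z, (∫ t in Ioc (0 : ℝ) 1, h (z + c t)) ∂μ := (integral_integral_swap hint).symm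
    _ = 0 := by simp [← intervalIntegral.integral_of_le zero_le_one, h0]

namespace UnitAddTorus

variable {ι : Type*}

def mk (y : ι → ℝ) : UnitAddTorus ι := fun i => (y i : UnitAddCircle)

theorem mk_add (x y : ι → ℝ) : mk (x + y) = mk x + mk y := rfl

theorem isOpenQuotientMap_mk : IsOpenQuotientMap (mk : (ι → ℝ) → UnitAddTorus ι) :=
  .piMap fun _ => QuotientAddGroup.isOpenQuotientMap_mk

theorem exists_continuousMap_comp_mk_eq {E : Type*} [TopologicalSpace E] {g : (ι → ℝ) → E}
    (hg : Continuous g) (hper : ∀ y (m : ι → ℤ), g (y + fun i => (m i : ℝ)) = g y) :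
    ∃ F : C(UnitAddTorus ι, E), ∀ y, F (mk y) = g y := by
  have hfac : FactorsThrough g mk := fun a b hab => by
    have hdiff : ∀ i, ∃ m : ℤ, m • (1 : ℝ) = a i - b i := fun i =>
      (AddCircle.coe_eq_zero_iff 1).mp <| by
        rw [AddCircle.coe_sub, sub_eq_zero]
        exact congrFun hab i
    choose m hm using hdiff
    simp only [zsmul_one] at hm
    rw [← hper b m]
    congr 1
    funext i
    simp [hm i]
  let q : C(ι → ℝ, UnitAddTorus ι) := ⟨mk, isOpenQuotientMap_mk.continuous⟩
  exact ⟨isOpenQuotientMap_mk.isQuotientMap.lift (f := q) ⟨g, hg⟩ hfac,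
    DFunLike.congr_fun (isOpenQuotientMap_mk.isQuotientMap.lift_comp (f := q) ⟨g, hg⟩ hfac)⟩

/-- The paper's `I_v F` for `v = 2π w`, transported to the unit torus. -/
noncomputable def xrayTransform {E : Type*} [NormedAddCommGroup E] [NormedSpace ℝ E]
    (F : UnitAddTorus ι → E) (w : ι → ℤ) (z : UnitAddTorus ι) : E :=
  ∫ t in (0 : ℝ)..1, F (z + mk (t • fun i => (w i : ℝ)))

variable [Fintype ι]

theorem mFourier_mk (k : ι → ℤ) (y : ι → ℝ) :
    mFourier k (mk y) = exp (2 * π * I * (∑ i, k i * y i : ℝ)) := by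
  push_cast
  rw [Finset.mul_sum, Complex.exp_sum]
  refine Finset.prod_congr rfl fun i _ => ?_
  simp only [mk, fourier_coe_apply, ofReal_one, div_one]
  ring_nf

theorem mFourier_add_mk_smul {k w : ι → ℤ} (hkw : k ⬝ᵥ w = 0) (z : UnitAddTorus ι) (t : ℝ) :
    mFourier k (z + mk (t • fun i => (w i : ℝ))) = mFourier k z := by
  obtain ⟨y, rfl⟩ := isOpenQuotientMap_mk.surjective z
  have hsum : ∑ i, (k i : ℝ) * (y + t • fun i => (w i : ℝ)) i = ∑ i, k i * y i := by
    have hkw' : ∑ i, (k i : ℝ) * w i = 0 := by exact_mod_cast hkw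
    simp [mul_add, Finset.sum_add_distrib, mul_left_comm _ t, ← Finset.mul_sum, hkw']
  rw [← mk_add, mFourier_mk, mFourier_mk, hsum]

theorem xrayTransform_mFourier_mul {k w : ι → ℤ} (hkw : k ⬝ᵥ w = 0)
    (F : UnitAddTorus ι → ℂ) (z : UnitAddTorus ι) :
    xrayTransform (fun x => mFourier k x * F x) w z = mFourier k z * xrayTransform F w z := by
  simp only [xrayTransform, mFourier_add_mk_smul hkw, intervalIntegral.integral_const_mul]

theorem mFourierCoeff_eq_zero_of_xrayTransform_eq_zero {F : C(UnitAddTorus ι, ℂ)} {k w : ι → ℤ}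
    (hkw : w ⬝ᵥ k = 0) (hF : ∀ z, xrayTransform F w z = 0) : mFourierCoeff F k = 0 := by
  have hkw' : -k ⬝ᵥ w = 0 := by rw [dotProduct_comm, dotProduct_neg, hkw, neg_zero]
  -- `mFourierCoeff` integrates against this product of normalised Haar measures.
  refine integral_eq_zero_of_forall_intervalIntegral_comp_add_eq_zero
    (Measure.pi fun _ => AddCircle.haarAddCircle) (mFourier (-k) * F)
    (c := fun t => mk (t • fun i => (w i : ℝ)))
    (isOpenQuotientMap_mk.continuous.comp (continuous_id.smul continuous_const)) fun z => ?_
  exact (xrayTransform_mFourier_mul hkw' F z).trans (by rw [hF z, mul_zero])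

theorem eq_zero_of_mFourierCoeff_eq_zero {F : C(UnitAddTorus ι, ℂ)}
    (hF : ∀ k, mFourierCoeff F k = 0) : F = 0 := by
  have hsummable : Summable (mFourierCoeff F) := by
    rw [show mFourierCoeff F = 0 from funext hF]
    exact summable_zero
  ext x
  have hsum := hasSum_mFourier_series_apply_of_summable hsummable x
  simp only [hF, smul_eq_mul, zero_mul] at hsum
  exact hsum.unique hasSum_zero

theorem eq_zero_of_xrayTransform_eq_zero [Nontrivial ι] {F : C(UnitAddTorus ι, ℂ)}
    (hF : ∀ w : ι → ℤ, w ≠ 0 → ∀ z, xrayTransform F w z = 0) : F = 0 :=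
  eq_zero_of_mFourierCoeff_eq_zero fun k =>
    have ⟨w, hw, hwk⟩ := exists_ne_zero_dotProduct_eq_zero k
    mFourierCoeff_eq_zero_of_xrayTransform_eq_zero hwk (hF w hw)

end UnitAddTorus

open UnitAddTorus in
theorem xray_torus_injective (n : ℕ) (hn : 2 ≤ n) (f : (Fin n → ℝ) → ℂ)
    (hf : Continuous f)
    (hper : ∀ (x : Fin n → ℝ) (m : Fin n → ℤ),
      f (x + fun i => 2 * π * m i) = f x)
    (hvanish : ∀ w : Fin n → ℤ, w ≠ 0 → ∀ x : Fin n → ℝ,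
      ∫ t in (0:ℝ)..1, f (x + t • fun i => 2 * π * w i) = 0) :
    f = 0 := by
  have : Nontrivial (Fin n) := Fin.nontrivial_iff_two_le.mpr hn
  obtain ⟨F, hF⟩ := exists_continuousMap_comp_mk_eq (g := fun y => f ((2 * π) • y))
    (hf.comp (continuous_const_smul _)) fun y m => by
      rw [smul_add]
      exact hper _ m
  have hF0 : F = 0 := eq_zero_of_xrayTransform_eq_zero fun w hw z => by
    obtain ⟨y, rfl⟩ := isOpenQuotientMap_mk.surjective z
    simp_rw [xrayTransform, ← UnitAddTorus.mk_add, hF, smul_add,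
      smul_comm (2 * π) _ (fun i => (w i : ℝ))]
    exact hvanish w hw _
  funext x
  have hx := hF ((2 * π)⁻¹ • x)
  rw [smul_inv_smul₀ two_pi_pos.ne', hF0] at hx
  exact hx.symm
end

section
/- For 0 < r < t, the kernel K₀(r,t) = ∫_r^t 1/(√(1-(s/t)²) · s · √((s/r)²-1)) ds equals π/2. -/
/-!
The substitution `u = s⁻²` turns the kernel into `du / (2 √((u - t⁻²) (r⁻² - u)))`, and
`u ↦ arcsin` of the affine map sending `[t⁻², r⁻²]` onto `[-1, 1]` is a primitive of
`1 / √((u - t⁻²) (r⁻² - u))`. The integrand is positive, so the fundamental theorem of calculus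
applies to this improper integral, and the primitive increases by `π` over the interval.
-/

open Real Set

noncomputable def arcsinChord (a b u : ℝ) : ℝ := arcsin ((2 * u - a - b) / (b - a))

theorem continuous_arcsinChord (a b : ℝ) : Continuous (arcsinChord a b) := by
  unfold arcsinChord; fun_prop

theorem arcsinChord_left {a b : ℝ} (hab : a ≠ b) : arcsinChord a b a = -(π / 2) := by
  rw [arcsinChord, show 2 * a - a - b = -(b - a) by ring, neg_div,
    div_self (sub_ne_zero.2 hab.symm), arcsin_neg_one]

theorem arcsinChord_right {a b : ℝ} (hab : a ≠ b) : arcsinChord a b b = π / 2 := by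
  rw [arcsinChord, show 2 * b - a - b = b - a by ring, div_self (sub_ne_zero.2 hab.symm),
    arcsin_one]

theorem hasDerivAt_arcsinChord {a b u : ℝ} (hau : a < u) (hub : u < b) :
    HasDerivAt (arcsinChord a b) (1 / √((u - a) * (b - u))) u := by
  have hba : 0 < b - a := by linarith
  set w := (2 * u - a - b) / (b - a)
  have hw : -1 < w ∧ w < 1 := by
    constructor <;> [rw [lt_div_iff₀ hba]; rw [div_lt_one hba]] <;> linarith
  have hsqrt : √(1 - w ^ 2) = 2 / (b - a) * √((u - a) * (b - u)) := by
    rw [show 1 - w ^ 2 = (2 / (b - a)) ^ 2 * ((u - a) * (b - u)) by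
      simp only [w]; field_simp; ring, sqrt_mul (by positivity), sqrt_sq (by positivity)]
  have hinner : HasDerivAt (fun u => (2 * u - a - b) / (b - a)) (2 / (b - a)) u := by
    simpa using (((hasDerivAt_id u).const_mul 2).sub_const a).sub_const b |>.div_const (b - a)
  refine ((hasDerivAt_arcsin hw.1.ne' hw.2.ne).comp u hinner).congr_deriv ?_
  have : 0 < √((u - a) * (b - u)) := sqrt_pos.2 (mul_pos (by linarith) (by linarith))
  rw [hsqrt]; field_simp

theorem hasDerivAt_neg_arcsinChord_inv_sq {r s t : ℝ} (hr : 0 < r) (hrs : r < s) (hst : s < t) :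
    HasDerivAt (fun s => -arcsinChord (t ^ 2)⁻¹ (r ^ 2)⁻¹ (s ^ 2)⁻¹ / 2)
      (1 / (√(1 - (s / t) ^ 2) * s * √((s / r) ^ 2 - 1))) s := by
  have hs : 0 < s := hr.trans hrs
  have ht : 0 < t := hs.trans hst
  have hlt : (t ^ 2)⁻¹ < (s ^ 2)⁻¹ := by gcongr
  have hgt : (s ^ 2)⁻¹ < (r ^ 2)⁻¹ := by gcongr
  have hA : 0 < 1 - (s / t) ^ 2 := by
    rw [sub_pos, div_pow, div_lt_one (pow_pos ht 2)]; gcongr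
  have hB : 0 < (s / r) ^ 2 - 1 := by
    rw [sub_pos, div_pow, one_lt_div (pow_pos hr 2)]; gcongr
  have hsqrt : √(((s ^ 2)⁻¹ - (t ^ 2)⁻¹) * ((r ^ 2)⁻¹ - (s ^ 2)⁻¹))
      = √(1 - (s / t) ^ 2) * √((s / r) ^ 2 - 1) / s ^ 2 := by
    rw [show ((s ^ 2)⁻¹ - (t ^ 2)⁻¹) * ((r ^ 2)⁻¹ - (s ^ 2)⁻¹)
        = (1 - (s / t) ^ 2) * ((s / r) ^ 2 - 1) / (s ^ 2) ^ 2 by field_simp,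
      sqrt_div' _ (pow_nonneg (sq_nonneg s) 2), sqrt_sq (sq_nonneg s), sqrt_mul hA.le]
  have hinv := (hasDerivAt_pow 2 s).inv (pow_pos hs 2).ne'
  refine (((hasDerivAt_arcsinChord hlt hgt).comp s hinv).neg.div_const 2).congr_deriv ?_
  have : 0 < √(1 - (s / t) ^ 2) * √((s / r) ^ 2 - 1) := by positivity
  rw [hsqrt, Nat.cast_ofNat, pow_one]; field_simp

theorem integral_eq_sub_of_hasDerivAt_of_nonneg {f f' : ℝ → ℝ} {a b : ℝ} (hab : a ≤ b)
    (hcont : ContinuousOn f (Icc a b)) (hderiv : ∀ x ∈ Ioo a b, HasDerivAt f (f' x) x)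
    (hpos : ∀ x ∈ Ioo a b, 0 ≤ f' x) : ∫ x in a..b, f' x = f b - f a :=
  intervalIntegral.integral_eq_sub_of_hasDerivAt_of_le hab hcont hderiv <|
    (intervalIntegrable_iff_integrableOn_Ioc_of_le hab).2 <|
      intervalIntegral.integrableOn_deriv_of_nonneg hcont hderiv hpos

theorem abel_kernel_K0 (r t : ℝ) (hr : 0 < r) (hrt : r < t) :
    ∫ s in r..t,
        1 / (Real.sqrt (1 - (s / t) ^ 2) * s * Real.sqrt ((s / r) ^ 2 - 1))
      = π / 2 := by
  set F : ℝ → ℝ := fun s => -arcsinChord (t ^ 2)⁻¹ (r ^ 2)⁻¹ (s ^ 2)⁻¹ / 2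
  have hne : (t ^ 2)⁻¹ ≠ (r ^ 2)⁻¹ := (inv_strictAnti₀ (pow_pos hr 2) (by gcongr)).ne
  have hcont : ContinuousOn F (Icc r t) :=
    (((continuous_arcsinChord _ _).comp_continuousOn <| (continuousOn_pow 2).inv₀
      fun s hs => (pow_pos (hr.trans_le hs.1) 2).ne').neg).div_const 2
  rw [integral_eq_sub_of_hasDerivAt_of_nonneg hrt.le hcont
    (fun s hs => hasDerivAt_neg_arcsinChord_inv_sq hr hs.1 hs.2)
    (fun s hs => by have := hr.trans hs.1; positivity)]
  simp only [F, arcsinChord_left hne, arcsinChord_right hne]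
  ring
end

section
/- If F : ℝ → ℝ is continuously differentiable with compact support, even, and satisfies |F'(z)| ≤ C·z for z ≥ 0, then G'(r) = ∫₀^∞ F'(√(z²+r²))/√(z²+r²) dz converges as r → 0⁺ to L = ∫₀^∞ F'(z)/z dz, with the quantitative bound |G'(r) - L| ≤ 2Cr. -/
open MeasureTheory Real Set Filter Topology

/-!
Substituting `s = √(z² + r²)` turns the first integral into
`∫_{s > r} F'(s) / √(s² - r²) ds`. Split the second integral at `r`. On `(0, r]` the
integrand `F'(z) / z` is bounded by `C`, which contributes at most `C r`. On `(r, ∞)` the two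
integrands differ by at most `C s (1 / √(s² - r²) - 1 / s) = C (s / √(s² - r²) - 1)`, whose
integral is exactly `r`: an antiderivative is `√(s² - r²) - s`, which equals `-r` at `s = r`
and tends to `0` at infinity.
-/

section SqrtSqSubSq

variable {r s : ℝ}

lemma sq_sub_sq_pos (hr : 0 ≤ r) (hs : r < s) : 0 < s ^ 2 - r ^ 2 := by nlinarith

lemma sqrt_sq_sub_sq_le_self (hr : 0 ≤ r) (hs : r < s) : √(s ^ 2 - r ^ 2) ≤ s :=
  (sqrt_le_sqrt (by nlinarith)).trans_eq (sqrt_sq (hr.trans hs.le))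

lemma sqrt_sq_sub_sq_sq_add_sq (hr : 0 ≤ r) (hs : r < s) :
    √(√(s ^ 2 - r ^ 2) ^ 2 + r ^ 2) = s := by
  rw [sq_sqrt (sq_sub_sq_pos hr hs).le, sub_add_cancel, sqrt_sq (hr.trans hs.le)]

lemma hasDerivAt_sqrt_sq_sub_sq (hr : 0 ≤ r) (hs : r < s) :
    HasDerivAt (fun s ↦ √(s ^ 2 - r ^ 2)) (s / √(s ^ 2 - r ^ 2)) s := by
  have hsq := ((hasDerivAt_pow 2 s).sub_const (r ^ 2)).sqrt (sq_sub_sq_pos hr hs).ne'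
  convert hsq using 1
  field_simp
  ring

lemma strictMonoOn_sqrt_sq_sub_sq (hr : 0 ≤ r) :
    StrictMonoOn (fun s ↦ √(s ^ 2 - r ^ 2)) (Ioi r) :=
  fun a ha b _ hab ↦ sqrt_lt_sqrt (sq_sub_sq_pos hr ha).le (by nlinarith [mem_Ioi.1 ha])

lemma image_sqrt_sq_sub_sq_Ioi (hr : 0 ≤ r) :
    (fun s ↦ √(s ^ 2 - r ^ 2)) '' Ioi r = Ioi 0 := by
  refine Subset.antisymm (image_subset_iff.2 fun s hs ↦ sqrt_pos.2 (sq_sub_sq_pos hr hs)) ?_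
  intro y (hy : 0 < y)
  refine ⟨√(y ^ 2 + r ^ 2), (lt_sqrt hr).2 (by nlinarith), ?_⟩
  simp only [sq_sqrt (by positivity : 0 ≤ y ^ 2 + r ^ 2), add_sub_cancel_right, sqrt_sq hy.le]

theorem integral_Ioi_comp_sqrt_sq_add_sq_div (hr : 0 ≤ r) (f : ℝ → ℝ) :
    ∫ z in Ioi 0, f √(z ^ 2 + r ^ 2) / √(z ^ 2 + r ^ 2) =
      ∫ s in Ioi r, f s / √(s ^ 2 - r ^ 2) := by
  rw [← image_sqrt_sq_sub_sq_Ioi hr,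
    integral_image_eq_integral_abs_deriv_smul measurableSet_Ioi
      (fun s hs ↦ (hasDerivAt_sqrt_sq_sub_sq hr hs).hasDerivWithinAt)
    (strictMonoOn_sqrt_sq_sub_sq hr).injOn]
  refine setIntegral_congr_fun measurableSet_Ioi fun s (hs : r < s) ↦ ?_
  have hs0 : 0 < s := hr.trans_lt hs
  have hq : 0 < √(s ^ 2 - r ^ 2) := sqrt_pos.2 (sq_sub_sq_pos hr hs)
  simp only [sqrt_sq_sub_sq_sq_add_sq hr hs, smul_eq_mul, abs_of_pos (div_pos hs0 hq)]
  field_simp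

lemma hasDerivAt_sqrt_sq_sub_sq_sub_self (hr : 0 ≤ r) (hs : r < s) :
    HasDerivAt (fun s ↦ √(s ^ 2 - r ^ 2) - s) (s / √(s ^ 2 - r ^ 2) - 1) s :=
  (hasDerivAt_sqrt_sq_sub_sq hr hs).sub (hasDerivAt_id s)

lemma one_le_div_sqrt_sq_sub_sq (hr : 0 ≤ r) (hs : r < s) : 1 ≤ s / √(s ^ 2 - r ^ 2) :=
  (one_le_div (sqrt_pos.2 (sq_sub_sq_pos hr hs))).2 (sqrt_sq_sub_sq_le_self hr hs)

-- Rationalize: `√(s² - r²) - s = -r² / (√(s² - r²) + s)`.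
lemma tendsto_sqrt_sq_sub_sq_sub_self_atTop (hr : 0 ≤ r) :
    Tendsto (fun s ↦ √(s ^ 2 - r ^ 2) - s) atTop (𝓝 0) := by
  have hden : Tendsto (fun s ↦ √(s ^ 2 - r ^ 2) + s) atTop atTop :=
    tendsto_atTop_mono (fun _ ↦ le_add_of_nonneg_left (sqrt_nonneg _)) tendsto_id
  refine (hden.const_div_atTop (-r ^ 2)).congr' ?_
  filter_upwards [eventually_gt_atTop r] with s hs
  have hq := sqrt_pos.2 (sq_sub_sq_pos hr hs)
  rw [div_eq_iff (by linarith [hr.trans_lt hs])]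
  linear_combination (-1 : ℝ) * sq_sqrt (sq_sub_sq_pos hr hs).le

lemma integrableOn_Ioi_div_sqrt_sq_sub_sq_sub_one (hr : 0 ≤ r) :
    IntegrableOn (fun s ↦ s / √(s ^ 2 - r ^ 2) - 1) (Ioi r) :=
  integrableOn_Ioi_deriv_of_nonneg (by fun_prop)
    (fun _ hs ↦ hasDerivAt_sqrt_sq_sub_sq_sub_self hr hs)
    (fun _ hs ↦ sub_nonneg.2 (one_le_div_sqrt_sq_sub_sq hr hs))
    (tendsto_sqrt_sq_sub_sq_sub_self_atTop hr)

theorem integral_Ioi_div_sqrt_sq_sub_sq_sub_one (hr : 0 ≤ r) :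
    ∫ s in Ioi r, (s / √(s ^ 2 - r ^ 2) - 1) = r := by
  rw [integral_Ioi_of_hasDerivAt_of_nonneg (by fun_prop)
    (fun _ hs ↦ hasDerivAt_sqrt_sq_sub_sq_sub_self hr hs)
    (fun _ hs ↦ sub_nonneg.2 (one_le_div_sqrt_sq_sub_sq hr hs))
    (tendsto_sqrt_sq_sub_sq_sub_self_atTop hr)]
  simp

end SqrtSqSubSq

section LinearBound

variable {f : ℝ → ℝ} {C r : ℝ}

lemma abs_div_self_le_of_abs_le_mul_abs (hbound : ∀ z, |f z| ≤ C * |z|) {z : ℝ} (hz : 0 < z) :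
    |f z / z| ≤ C := by
  rw [abs_div, abs_of_pos hz, div_le_iff₀ hz]
  simpa [abs_of_pos hz] using hbound z

theorem integrableOn_Ioi_div_self (hmeas : Measurable f) (hsupp : HasCompactSupport f)
    (hbound : ∀ z, |f z| ≤ C * |z|) : IntegrableOn (fun z ↦ f z / z) (Ioi 0) := by
  refine Integrable.mono' ((integrableOn_const hsupp.measure_lt_top.ne).integrable_indicator
    (isClosed_tsupport f).measurableSet).restrict
    (hmeas.div measurable_id).aestronglyMeasurable ?_
  refine (ae_restrict_iff' measurableSet_Ioi).2 (.of_forall fun z (hz : 0 < z) ↦ ?_)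
  by_cases hzf : z ∈ tsupport f
  · rw [indicator_of_mem hzf, norm_eq_abs]
    exact abs_div_self_le_of_abs_le_mul_abs hbound hz
  · simp [indicator_of_notMem hzf, image_eq_zero_of_notMem_tsupport hzf]

theorem abs_integral_Ioc_div_self_le (hbound : ∀ z, |f z| ≤ C * |z|) (hr : 0 ≤ r) :
    |∫ z in Ioc 0 r, f z / z| ≤ C * r := by
  have := norm_setIntegral_le_of_norm_le_const (μ := volume) (s := Ioc 0 r)
    (f := fun z ↦ f z / z) measure_Ioc_lt_top
    fun z hz ↦ abs_div_self_le_of_abs_le_mul_abs hbound hz.1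
  simpa [hr] using this

lemma abs_div_sqrt_sq_sub_sq_sub_div_self_le (hbound : ∀ z, |f z| ≤ C * |z|) (hr : 0 ≤ r)
    {s : ℝ} (hs : r < s) :
    |f s / √(s ^ 2 - r ^ 2) - f s / s| ≤ C * (s / √(s ^ 2 - r ^ 2) - 1) := by
  have hs0 : 0 < s := hr.trans_lt hs
  have hq : 0 < √(s ^ 2 - r ^ 2) := sqrt_pos.2 (sq_sub_sq_pos hr hs)
  have hgap : 0 ≤ 1 / √(s ^ 2 - r ^ 2) - 1 / s :=
    sub_nonneg.2 (one_div_le_one_div_of_le hq (sqrt_sq_sub_sq_le_self hr hs))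
  have hfs : |f s| ≤ C * s := by simpa [abs_of_pos hs0] using hbound s
  calc |f s / √(s ^ 2 - r ^ 2) - f s / s| = |f s| * (1 / √(s ^ 2 - r ^ 2) - 1 / s) := by
        rw [← abs_of_nonneg hgap, ← abs_mul]; ring_nf
    _ ≤ C * s * (1 / √(s ^ 2 - r ^ 2) - 1 / s) := mul_le_mul_of_nonneg_right hfs hgap
    _ = C * (s / √(s ^ 2 - r ^ 2) - 1) := by field_simp

theorem abs_integral_Ioi_div_sqrt_sq_sub_sq_sub_div_self_le (hmeas : Measurable f)
    (hsupp : HasCompactSupport f) (hbound : ∀ z, |f z| ≤ C * |z|) (hr : 0 ≤ r) :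
    |(∫ s in Ioi r, f s / √(s ^ 2 - r ^ 2)) - ∫ s in Ioi r, f s / s| ≤ C * r := by
  have hdom := (integrableOn_Ioi_div_sqrt_sq_sub_sq_sub_one hr).const_mul C
  have hpt : ∀ᵐ s ∂volume.restrict (Ioi r),
      ‖f s / √(s ^ 2 - r ^ 2) - f s / s‖ ≤ C * (s / √(s ^ 2 - r ^ 2) - 1) :=
    (ae_restrict_iff' measurableSet_Ioi).2
      (.of_forall fun _ hs ↦ abs_div_sqrt_sq_sub_sq_sub_div_self_le hbound hr hs)
  have hdiff : IntegrableOn (fun s ↦ f s / √(s ^ 2 - r ^ 2) - f s / s) (Ioi r) :=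
    hdom.mono' (by fun_prop) hpt
  have hself := (integrableOn_Ioi_div_self hmeas hsupp hbound).mono_set (Ioi_subset_Ioi hr)
  have hsqrt : IntegrableOn (fun s ↦ f s / √(s ^ 2 - r ^ 2)) (Ioi r) :=
    (hdiff.add hself).congr_fun (fun _ _ ↦ sub_add_cancel _ _) measurableSet_Ioi
  rw [← integral_sub hsqrt hself, ← norm_eq_abs]
  calc ‖∫ s in Ioi r, (f s / √(s ^ 2 - r ^ 2) - f s / s)‖
      ≤ ∫ s in Ioi r, C * (s / √(s ^ 2 - r ^ 2) - 1) := norm_integral_le_of_norm_le hdom hpt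
    _ = C * r := by rw [integral_const_mul, integral_Ioi_div_sqrt_sq_sub_sq_sub_one hr]

end LinearBound

theorem radon_limit_estimate_general (F : ℝ → ℝ)
    (hsupp : HasCompactSupport F)
    (C : ℝ)
    (hbound : ∀ z, |deriv F z| ≤ C * |z|) :
    ∀ r > (0 : ℝ),
      |(∫ z in Set.Ioi (0 : ℝ),
            deriv F (Real.sqrt (z ^ 2 + r ^ 2)) / Real.sqrt (z ^ 2 + r ^ 2)) -
          ∫ z in Set.Ioi (0 : ℝ), deriv F z / z| ≤ 2 * C * r := by
  intro r hr
  have hint := integrableOn_Ioi_div_self (measurable_deriv F) hsupp.deriv hbound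
  rw [integral_Ioi_comp_sqrt_sq_add_sq_div hr.le, ← Ioc_union_Ioi_eq_Ioi hr.le,
    setIntegral_union (Ioc_disjoint_Ioi le_rfl) measurableSet_Ioi
      (hint.mono_set Ioc_subset_Ioi_self) (hint.mono_set (Ioi_subset_Ioi hr.le))]
  calc _ = |((∫ s in Ioi r, deriv F s / √(s ^ 2 - r ^ 2)) - ∫ s in Ioi r, deriv F s / s) -
          ∫ z in Ioc 0 r, deriv F z / z| := by
          congr 1; ring
    _ ≤ C * r + C * r := (abs_sub _ _).trans (add_le_add
          (abs_integral_Ioi_div_sqrt_sq_sub_sq_sub_div_self_le (measurable_deriv F) hsupp.deriv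
            hbound hr.le)
          (abs_integral_Ioc_div_self_le hbound hr.le))
    _ = 2 * C * r := by ring

theorem radon_limit_estimate (F : ℝ → ℝ) (hF : ContDiff ℝ 1 F)
    (hsupp : HasCompactSupport F) (heven : ∀ x, F x = F (-x))
    (C : ℝ) (hC : 0 ≤ C)
    (hbound : ∀ z, |deriv F z| ≤ C * |z|)
    (hlip : ∀ a b, |deriv F a - deriv F b| ≤ C * |a - b|) :
    ∀ r > (0 : ℝ),
      |(∫ z in Set.Ioi (0 : ℝ),
            deriv F (Real.sqrt (z ^ 2 + r ^ 2)) / Real.sqrt (z ^ 2 + r ^ 2)) -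
          ∫ z in Set.Ioi (0 : ℝ), deriv F z / z| ≤ 2 * C * r :=
  radon_limit_estimate_general F hsupp C hbound
end
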